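/- (Z_2^2-supersymmetry group law) On quadruples (t, z, θ¹, θ²) with entries in a Z_2^2-commutative algebra A, of degrees (0,0), (1,1), (0,1), (1,0) respectively, the operation (t,z,θ¹,θ²)·(t',z',θ'¹,θ'²) := (t + t' + θ¹θ'¹ + θ²θ'², z + z' + θ¹θ'² − θ²θ'¹, θ¹+θ'¹, θ²+θ'²) is associative, has identity (0,0,0,0), and every element has inverse (−t, −z, −θ¹, −θ²); hence it defines a group structure. -/

import Mathlib

/-- The standard pairing on `ℤ₂²`. -/
def pair2 (γ δ : ZMod 2 × ZMod 2) : ZMod 2 := γ.1 * δ.1 + γ.2 * δ.2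

/-- The `ℤ₂²`-supersymmetry product on quadruples `(t, z, θ¹, θ²)`. -/
def susyOp {A : Type*} [Ring A] (q q' : A × A × A × A) : A × A × A × A :=
  (q.1 + q'.1 + q.2.2.1 * q'.2.2.1 + q.2.2.2 * q'.2.2.2,
   q.2.1 + q'.2.1 + q.2.2.1 * q'.2.2.2 - q.2.2.2 * q'.2.2.1,
   q.2.2.1 + q'.2.2.1,
   q.2.2.2 + q'.2.2.2)

/-- The candidate inverse `(−t, −z, −θ¹, −θ²)`. -/
def susyInv {A : Type*} [Ring A] (q : A × A × A × A) : A × A × A × A :=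
  (-q.1, -q.2.1, -q.2.2.1, -q.2.2.2)

/-- The predicate that the quadruple `(t, z, θ¹, θ²)` has components of `ℤ₂²`-degrees
`(0,0)`, `(1,1)`, `(0,1)`, `(1,0)` respectively. -/
def susyDeg {A : Type*} [Ring A] [Algebra ℝ A]
    (𝒜 : ZMod 2 × ZMod 2 → Submodule ℝ A) (q : A × A × A × A) : Prop :=
  q.1 ∈ 𝒜 (0, 0) ∧ q.2.1 ∈ 𝒜 (1, 1) ∧ q.2.2.1 ∈ 𝒜 (0, 1) ∧ q.2.2.2 ∈ 𝒜 (1, 0)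

/-!
The correction terms `θ¹θ'¹ + θ²θ'²` and `θ¹θ'² − θ²θ'¹` are bilinear in the odd coordinates,
so associativity and the unit laws hold in any ring. The inverse law needs exactly
`θ¹θ¹ = θ²θ² = 0` and `θ¹θ² = θ²θ¹`, which the sign rule gives: `(0,1)` and `(1,0)` pair to `1`
with themselves, so their squares satisfy `a² = −a²` and vanish since `2` is invertible in `ℝ`,
while they pair to `0` with each other. Closure under the product is the graded multiplication
`𝒜 γ · 𝒜 δ ⊆ 𝒜 (γ + δ)`.
-/

section Ring

variable {A : Type*} [Ring A]

theorem susyOp_assoc (q q' q'' : A × A × A × A) :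
    susyOp (susyOp q q') q'' = susyOp q (susyOp q' q'') := by
  simp only [susyOp, Prod.mk.injEq]
  exact ⟨by noncomm_ring, by noncomm_ring, by abel, by abel⟩

theorem susyOp_zero (q : A × A × A × A) : susyOp q (0, 0, 0, 0) = q := by
  simp [susyOp]

theorem zero_susyOp (q : A × A × A × A) : susyOp (0, 0, 0, 0) q = q := by
  simp [susyOp]

theorem susyOp_susyInv (t z : A) {θ₁ θ₂ : A} (h₁ : θ₁ * θ₁ = 0) (h₂ : θ₂ * θ₂ = 0)
    (h₁₂ : Commute θ₁ θ₂) : susyOp (t, z, θ₁, θ₂) (susyInv (t, z, θ₁, θ₂)) = (0, 0, 0, 0) := by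
  simp [susyOp, susyInv, h₁, h₂, h₁₂.eq]

theorem susyInv_susyOp (t z : A) {θ₁ θ₂ : A} (h₁ : θ₁ * θ₁ = 0) (h₂ : θ₂ * θ₂ = 0)
    (h₁₂ : Commute θ₁ θ₂) : susyOp (susyInv (t, z, θ₁, θ₂)) (t, z, θ₁, θ₂) = (0, 0, 0, 0) := by
  simp [susyOp, susyInv, h₁, h₂, h₁₂.eq]

end Ring

section Graded

variable {A : Type*} [Ring A] [Algebra ℝ A] {𝒜 : ZMod 2 × ZMod 2 → Submodule ℝ A}

def IsGradedCommutative (𝒜 : ZMod 2 × ZMod 2 → Submodule ℝ A) : Prop :=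
  ∀ γ δ (a b : A), a ∈ 𝒜 γ → b ∈ 𝒜 δ → a * b = ((-1 : ℝ) ^ (pair2 γ δ).val) • (b * a)

theorem mul_self_eq_zero_of_pair2_self_eq_one (hsign : IsGradedCommutative 𝒜)
    {γ : ZMod 2 × ZMod 2} (hγ : pair2 γ γ = 1) {a : A} (ha : a ∈ 𝒜 γ) : a * a = 0 := by
  have h : a * a = -(a * a) := by simpa [hγ, ZMod.val_one] using hsign γ γ a a ha ha
  have h2 : (2 : ℝ) • (a * a) = 0 := by
    rw [two_smul]
    nth_rewrite 2 [h]
    exact add_neg_cancel _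
  exact (smul_eq_zero.mp h2).resolve_left two_ne_zero

theorem commute_of_pair2_eq_zero (hsign : IsGradedCommutative 𝒜)
    {γ δ : ZMod 2 × ZMod 2} (hγδ : pair2 γ δ = 0) {a b : A} (ha : a ∈ 𝒜 γ) (hb : b ∈ 𝒜 δ) :
    Commute a b := by
  simpa [Commute, SemiconjBy, hγδ] using hsign γ δ a b ha hb

theorem susyDeg_susyOp (hmul : ∀ γ δ (a b : A), a ∈ 𝒜 γ → b ∈ 𝒜 δ → a * b ∈ 𝒜 (γ + δ))
    {q q' : A × A × A × A} (hq : susyDeg 𝒜 q) (hq' : susyDeg 𝒜 q') :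
    susyDeg 𝒜 (susyOp q q') := by
  obtain ⟨ht, hz, h₁, h₂⟩ := hq
  obtain ⟨ht', hz', h₁', h₂'⟩ := hq'
  have h_two : (1 : ZMod 2) + 1 = 0 := rfl
  have h₁₁ : q.2.2.1 * q'.2.2.1 ∈ 𝒜 (0, 0) := by simpa [h_two] using hmul _ _ _ _ h₁ h₁'
  have h₂₂ : q.2.2.2 * q'.2.2.2 ∈ 𝒜 (0, 0) := by simpa [h_two] using hmul _ _ _ _ h₂ h₂'
  exact ⟨add_mem (add_mem (add_mem ht ht') h₁₁) h₂₂,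
    sub_mem (add_mem (add_mem hz hz') (hmul _ _ _ _ h₁ h₂')) (hmul _ _ _ _ h₂ h₁'),
    add_mem h₁ h₁', add_mem h₂ h₂'⟩

theorem susyDeg_susyInv {q : A × A × A × A} (hq : susyDeg 𝒜 q) : susyDeg 𝒜 (susyInv q) :=
  ⟨neg_mem hq.1, neg_mem hq.2.1, neg_mem hq.2.2.1, neg_mem hq.2.2.2⟩

end Graded

/-- `ℤ₂²`-supersymmetry group law: on quadruples `(t, z, θ¹, θ²)` with
entries in a `ℤ₂²`-commutative `ℝ`-algebra `A` of degrees `(0,0)`, `(1,1)`, `(0,1)`,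
`(1,0)`, the operation
`(t,z,θ¹,θ²)·(t',z',θ'¹,θ'²) = (t+t'+θ¹θ'¹+θ²θ'², z+z'+θ¹θ'²−θ²θ'¹, θ¹+θ'¹, θ²+θ'²)`
is associative, has identity `(0,0,0,0)`, every element has inverse `(−t,−z,−θ¹,−θ²)`,
and the set of such quadruples is closed under the operation and inverses; hence it
defines a group structure. -/
theorem susy_group_law {A : Type*} [Ring A] [Algebra ℝ A]
    (𝒜 : ZMod 2 × ZMod 2 → Submodule ℝ A)
    (hmul : ∀ γ δ (a b : A), a ∈ 𝒜 γ → b ∈ 𝒜 δ → a * b ∈ 𝒜 (γ + δ))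
    (hsign : ∀ γ δ (a b : A), a ∈ 𝒜 γ → b ∈ 𝒜 δ →
      a * b = ((-1 : ℝ) ^ (pair2 γ δ).val) • (b * a)) :
    (∀ q q' q'' : A × A × A × A, susyDeg 𝒜 q → susyDeg 𝒜 q' → susyDeg 𝒜 q'' →
      susyOp (susyOp q q') q'' = susyOp q (susyOp q' q'')) ∧
    (∀ q : A × A × A × A, susyDeg 𝒜 q →
      susyOp q (0, 0, 0, 0) = q ∧ susyOp (0, 0, 0, 0) q = q) ∧
    (∀ q : A × A × A × A, susyDeg 𝒜 q →
      susyOp q (susyInv q) = (0, 0, 0, 0) ∧ susyOp (susyInv q) q = (0, 0, 0, 0)) ∧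
    (∀ q q' : A × A × A × A, susyDeg 𝒜 q → susyDeg 𝒜 q' →
      susyDeg 𝒜 (susyOp q q') ∧ susyDeg 𝒜 (susyInv q)) := by
  have hsq₁ : ∀ a ∈ 𝒜 (0, 1), a * a = 0 := fun _ ha =>
    mul_self_eq_zero_of_pair2_self_eq_one hsign (by decide) ha
  have hsq₂ : ∀ a ∈ 𝒜 (1, 0), a * a = 0 := fun _ ha =>
    mul_self_eq_zero_of_pair2_self_eq_one hsign (by decide) ha
  refine ⟨fun q q' q'' _ _ _ => susyOp_assoc q q' q'',
    fun q _ => ⟨susyOp_zero q, zero_susyOp q⟩, ?_,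
    fun _ _ hq hq' => ⟨susyDeg_susyOp hmul hq hq', susyDeg_susyInv hq⟩⟩
  rintro ⟨t, z, θ₁, θ₂⟩ ⟨-, -, h₁, h₂⟩
  have h₁₂ : Commute θ₁ θ₂ := commute_of_pair2_eq_zero hsign (by decide) h₁ h₂
  exact ⟨susyOp_susyInv t z (hsq₁ θ₁ h₁) (hsq₂ θ₂ h₂) h₁₂,
    susyInv_susyOp t z (hsq₁ θ₁ h₁) (hsq₂ θ₂ h₂) h₁₂⟩
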